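/- arXiv:2305.11469 — 2 statements merged into one kernel-verified Lean document; each statement's English description precedes it below -/
import Mathlib

section
/- Let 0 < μ ≤ L and let α ∈ ℝᵐ satisfy 1/(mL) ≤ α_i for all i, and let π be a probability vector (π_i > 0, Σπ_i = 1). If πᵀα ≤ 2/(mL) − μ/(mL²), then λ := max{|1 − m(πᵀα)μ|, |1 − m(πᵀα)L|} ≤ 1 − μ/L. -/
theorem effective_stepsize_contraction_factor {m : ℕ}
    (μ L : ℝ) (hμ : 0 < μ) (hμL : μ ≤ L)
    (α π : Fin m → ℝ)
    (hα : ∀ i, 1 / ((m : ℝ) * L) ≤ α i)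
    (hπpos : ∀ i, 0 < π i) (hπsum : ∑ i, π i = 1)
    (hub : ∑ i, π i * α i ≤ 2 / ((m : ℝ) * L) - μ / ((m : ℝ) * L ^ 2)) :
    max |1 - (m : ℝ) * (∑ i, π i * α i) * μ| |1 - (m : ℝ) * (∑ i, π i * α i) * L| ≤
      1 - μ / L := by
  rcases Nat.eq_zero_or_pos m with hm | hm
  · subst hm; simp at hπsum
  have hL : 0 < L := lt_of_lt_of_le hμ hμL
  have hmR : (0:ℝ) < m := by exact_mod_cast hm
  have hmL : (0:ℝ) < (m:ℝ) * L := by positivity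
  -- lower bound on the sum
  have hlb : 1 / ((m : ℝ) * L) ≤ ∑ i, π i * α i := by
    calc 1 / ((m : ℝ) * L) = ∑ i, π i * (1 / ((m:ℝ)*L)) := by
          rw [← Finset.sum_mul, hπsum, one_mul]
      _ ≤ ∑ i, π i * α i :=
          Finset.sum_le_sum fun i _ =>
            mul_le_mul_of_nonneg_left (hα i) (hπpos i).le
  set S := ∑ i, π i * α i
  have h1 : (m:ℝ) * S * μ ≥ μ / L := by
    have : (m:ℝ) * (1 / ((m:ℝ)*L)) * μ ≤ (m:ℝ) * S * μ := by
      apply mul_le_mul_of_nonneg_right _ hμ.le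
      exact mul_le_mul_of_nonneg_left hlb hmR.le
    calc μ / L = (m:ℝ) * (1 / ((m:ℝ)*L)) * μ := by field_simp
      _ ≤ _ := this
  have h2 : (m:ℝ) * S * μ ≤ (2 / L - μ / L^2) * μ := by
    apply mul_le_mul_of_nonneg_right _ hμ.le
    calc (m:ℝ) * S ≤ (m:ℝ) * (2 / ((m : ℝ) * L) - μ / ((m : ℝ) * L ^ 2)) :=
          mul_le_mul_of_nonneg_left hub hmR.le
      _ = 2 / L - μ / L^2 := by field_simp
  have h3 : (m:ℝ) * S * L ≥ 1 := by
    have : (m:ℝ) * (1 / ((m:ℝ)*L)) * L ≤ (m:ℝ) * S * L := by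
      apply mul_le_mul_of_nonneg_right _ hL.le
      exact mul_le_mul_of_nonneg_left hlb hmR.le
    calc (1:ℝ) = (m:ℝ) * (1 / ((m:ℝ)*L)) * L := by field_simp
      _ ≤ _ := this
  have h4 : (m:ℝ) * S * L ≤ 2 - μ / L := by
    have : (m:ℝ) * S ≤ 2 / L - μ / L^2 := by
      calc (m:ℝ) * S ≤ (m:ℝ) * (2 / ((m : ℝ) * L) - μ / ((m : ℝ) * L ^ 2)) :=
            mul_le_mul_of_nonneg_left hub hmR.le
        _ = 2 / L - μ / L^2 := by field_simp
    calc (m:ℝ) * S * L ≤ (2 / L - μ / L^2) * L :=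
          mul_le_mul_of_nonneg_right this hL.le
      _ = 2 - μ / L := by field_simp
  have ht : μ / L ≤ 1 := (div_le_one hL).mpr hμL
  have htpos : 0 < μ / L := div_pos hμ hL
  apply max_le <;> rw [abs_le] <;> constructor
  ·
    nlinarith [sq_nonneg (μ/L - 1), sq_nonneg L]
  · linarith
  · nlinarith
  · linarith [h3]
end

section
/- Let A be row-stochastic with Perron projection Y∞ = 𝟙πᵀ, and consider x_{k+1} = A^H(x_k − D z_k) where D is diagonal with entries bounded by α_max ≥ 0. Then ‖x_{k+1} − Y∞ x_{k+1}‖_π ≤ σ^H ‖x_k − Y∞ x_k‖_π + α_max π̄^{1/2} σ^H ‖z_k‖₂, where σ = ‖A − Y∞‖_π and π̄ = max_i π_i. -/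
/-- The Euclidean (ℓ²) norm of a vector in `Fin m → ℝ`. -/
noncomputable def l2norm {m : ℕ} (x : Fin m → ℝ) : ℝ :=
  Real.sqrt (∑ i, x i ^ 2)

/-- The π-weighted Euclidean norm `‖x‖_π = (∑ i, π i * (x i)²)^{1/2}`. -/
noncomputable def piNorm {m : ℕ} (π x : Fin m → ℝ) : ℝ :=
  Real.sqrt (∑ i, π i * x i ^ 2)

/-- The spectral (ℓ²-operator) norm of a real matrix. -/
noncomputable def specNorm {m : ℕ} (X : Matrix (Fin m) (Fin m) ℝ) : ℝ :=
  ‖(Matrix.toEuclideanLin X).toContinuousLinearMap‖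

/-- The π-weighted induced matrix norm `‖X‖_π = ‖diag(√π) X diag(√π)⁻¹‖₂`. -/
noncomputable def piMatNorm {m : ℕ} (π : Fin m → ℝ) (X : Matrix (Fin m) (Fin m) ℝ) : ℝ :=
  specNorm (Matrix.diagonal (fun i => Real.sqrt (π i)) * X *
    Matrix.diagonal (fun i => (Real.sqrt (π i))⁻¹))

open Matrix

lemma norm_symm_eq {m : ℕ} (v : Fin m → ℝ) :
    ‖(WithLp.equiv 2 (Fin m → ℝ)).symm v‖ = l2norm v := by
  rw [EuclideanSpace.norm_eq]
  simp [l2norm, Real.norm_eq_abs, sq_abs]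

lemma l2norm_nonneg {m : ℕ} (x : Fin m → ℝ) : 0 ≤ l2norm x := Real.sqrt_nonneg _

lemma piNorm_nonneg {m : ℕ} (π x : Fin m → ℝ) : 0 ≤ piNorm π x := Real.sqrt_nonneg _

lemma l2norm_mulVec_le {m : ℕ} (X : Matrix (Fin m) (Fin m) ℝ) (v : Fin m → ℝ) :
    l2norm (X.mulVec v) ≤ specNorm X * l2norm v := by
  have h := (Matrix.toEuclideanLin X).toContinuousLinearMap.le_opNorm
      ((WithLp.equiv 2 (Fin m → ℝ)).symm v)
  have happ : (Matrix.toEuclideanLin X).toContinuousLinearMap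
      ((WithLp.equiv 2 (Fin m → ℝ)).symm v)
      = (WithLp.equiv 2 (Fin m → ℝ)).symm (X.mulVec v) := rfl
  rw [happ, norm_symm_eq, norm_symm_eq] at h
  exact h

lemma specNorm_mul_le {m : ℕ} (X Y : Matrix (Fin m) (Fin m) ℝ) :
    specNorm (X * Y) ≤ specNorm X * specNorm Y := by
  apply ContinuousLinearMap.opNorm_le_bound _
    (mul_nonneg (norm_nonneg _) (norm_nonneg _))
  intro w
  have hw : w = (WithLp.equiv 2 (Fin m → ℝ)).symm (WithLp.equiv 2 (Fin m → ℝ) w) := rfl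
  set v : Fin m → ℝ := WithLp.equiv 2 (Fin m → ℝ) w with hv
  have happ : (Matrix.toEuclideanLin (X * Y)).toContinuousLinearMap w
      = (WithLp.equiv 2 (Fin m → ℝ)).symm ((X * Y).mulVec v) := rfl
  rw [happ, norm_symm_eq, hw, norm_symm_eq]
  calc l2norm ((X * Y).mulVec v) = l2norm (X.mulVec (Y.mulVec v)) := by
        rw [← Matrix.mulVec_mulVec]
    _ ≤ specNorm X * l2norm (Y.mulVec v) := l2norm_mulVec_le _ _
    _ ≤ specNorm X * (specNorm Y * l2norm v) :=
        mul_le_mul_of_nonneg_left (l2norm_mulVec_le _ _) (norm_nonneg _)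
    _ = specNorm X * specNorm Y * l2norm v := by ring

lemma piNorm_eq {m : ℕ} (π : Fin m → ℝ) (hπ : ∀ i, 0 ≤ π i) (x : Fin m → ℝ) :
    piNorm π x = l2norm ((Matrix.diagonal fun i => Real.sqrt (π i)).mulVec x) := by
  unfold piNorm l2norm
  congr 1
  apply Finset.sum_congr rfl
  intro i _
  rw [Matrix.mulVec_diagonal, mul_pow, Real.sq_sqrt (hπ i)]

lemma TS_eq_one {m : ℕ} (π : Fin m → ℝ) (hπ : ∀ i, 0 < π i) :
    (Matrix.diagonal fun i => (Real.sqrt (π i))⁻¹) *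
      (Matrix.diagonal fun i => Real.sqrt (π i)) = (1 : Matrix (Fin m) (Fin m) ℝ) := by
  rw [Matrix.diagonal_mul_diagonal]
  have h : (fun i => (Real.sqrt (π i))⁻¹ * Real.sqrt (π i)) = fun _ : Fin m => (1 : ℝ) := by
    funext i
    exact inv_mul_cancel₀ (ne_of_gt (Real.sqrt_pos.mpr (hπ i)))
  rw [h, Matrix.diagonal_one]

lemma piNorm_mulVec_le {m : ℕ} (π : Fin m → ℝ) (hπ : ∀ i, 0 < π i)
    (X : Matrix (Fin m) (Fin m) ℝ) (v : Fin m → ℝ) :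
    piNorm π (X.mulVec v) ≤ piMatNorm π X * piNorm π v := by
  set S := Matrix.diagonal fun i : Fin m => Real.sqrt (π i) with hS
  set T := Matrix.diagonal fun i : Fin m => (Real.sqrt (π i))⁻¹ with hT
  rw [piNorm_eq π (fun i => (hπ i).le), piNorm_eq π (fun i => (hπ i).le)]
  have key : S.mulVec (X.mulVec v) = (S * X * T).mulVec (S.mulVec v) := by
    rw [Matrix.mulVec_mulVec, Matrix.mulVec_mulVec, Matrix.mul_assoc (S * X) T S,
      TS_eq_one π hπ, Matrix.mul_one]
  rw [key]
  exact l2norm_mulVec_le _ _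

lemma piMatNorm_mul_le {m : ℕ} (π : Fin m → ℝ) (hπ : ∀ i, 0 < π i)
    (X Y : Matrix (Fin m) (Fin m) ℝ) :
    piMatNorm π (X * Y) ≤ piMatNorm π X * piMatNorm π Y := by
  set S := Matrix.diagonal fun i : Fin m => Real.sqrt (π i) with hS
  set T := Matrix.diagonal fun i : Fin m => (Real.sqrt (π i))⁻¹ with hT
  have key : S * (X * Y) * T = (S * X * T) * (S * Y * T) := by
    have h := TS_eq_one π hπ
    simp only [Matrix.mul_assoc]
    rw [← Matrix.mul_assoc T S (Y * T), h, Matrix.one_mul]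
  unfold piMatNorm
  rw [show (Matrix.diagonal (fun i => Real.sqrt (π i)) * (X * Y) *
      Matrix.diagonal fun i => (Real.sqrt (π i))⁻¹) = (S * X * T) * (S * Y * T) from key]
  exact specNorm_mul_le _ _

lemma piMatNorm_nonneg {m : ℕ} (π : Fin m → ℝ) (X : Matrix (Fin m) (Fin m) ℝ) :
    0 ≤ piMatNorm π X := norm_nonneg _

lemma piMatNorm_pow_le {m : ℕ} (π : Fin m → ℝ) (hπ : ∀ i, 0 < π i)
    (X : Matrix (Fin m) (Fin m) ℝ) : ∀ n, 1 ≤ n →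
    piMatNorm π (X ^ n) ≤ piMatNorm π X ^ n := by
  intro n hn
  induction n with
  | zero => omega
  | succ k ih =>
    rcases Nat.eq_or_lt_of_le hn with h | h
    · simp [← h]
    · have hk : 1 ≤ k := by omega
      calc piMatNorm π (X ^ (k + 1)) = piMatNorm π (X ^ k * X) := by rw [pow_succ]
        _ ≤ piMatNorm π (X ^ k) * piMatNorm π X := piMatNorm_mul_le π hπ _ _
        _ ≤ piMatNorm π X ^ k * piMatNorm π X :=
            mul_le_mul_of_nonneg_right (ih hk) (piMatNorm_nonneg _ _)
        _ = piMatNorm π X ^ (k + 1) := by rw [pow_succ]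

lemma piNorm_sub_le {m : ℕ} (π : Fin m → ℝ) (hπ : ∀ i, 0 < π i) (u v : Fin m → ℝ) :
    piNorm π (u - v) ≤ piNorm π u + piNorm π v := by
  rw [piNorm_eq π (fun i => (hπ i).le), piNorm_eq π (fun i => (hπ i).le),
    piNorm_eq π (fun i => (hπ i).le)]
  rw [← norm_symm_eq, ← norm_symm_eq, ← norm_symm_eq, Matrix.mulVec_sub,
    WithLp.equiv_symm_apply, WithLp.toLp_sub]
  exact norm_sub_le _ _

theorem consensus_error_inequality {m : ℕ}
    (A : Matrix (Fin m) (Fin m) ℝ) (π : Fin m → ℝ)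
    (hA0 : ∀ i j, 0 ≤ A i j)
    (hrow : A.mulVec (fun _ => 1) = fun _ => 1)
    (hπA : A.vecMul π = π)
    (hπpos : ∀ i, 0 < π i) (hπsum : ∑ i, π i = 1)
    (H : ℕ) (hH : 1 ≤ H)
    (d : Fin m → ℝ) (αmax : ℝ) (hαmax : 0 ≤ αmax) (hd : ∀ i, |d i| ≤ αmax)
    (x z x' : Fin m → ℝ)
    (hupd : x' = (A ^ H).mulVec (x - (Matrix.diagonal d).mulVec z)) :
    let Y : Matrix (Fin m) (Fin m) ℝ := Matrix.of fun _ j => π j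
    piNorm π (x' - Y.mulVec x') ≤
      piMatNorm π (A - Y) ^ H * piNorm π (x - Y.mulVec x) +
        αmax * Real.sqrt (⨆ i, π i) * piMatNorm π (A - Y) ^ H * l2norm z := by
  intro Y
  -- basic matrix identities
  have hYA : Y * A = Y := by
    ext i j
    rw [Matrix.mul_apply]
    exact congrFun hπA j
  have hAY : A * Y = Y := by
    ext i j
    rw [Matrix.mul_apply]
    have := congrFun hrow i
    simp only [Matrix.mulVec, dotProduct, mul_one] at this
    simp only [Matrix.of_apply, Y]
    rw [← Finset.sum_mul, this, one_mul]
  have hYY : Y * Y = Y := by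
    ext i j
    rw [Matrix.mul_apply]
    simp only [Matrix.of_apply, Y]
    rw [← Finset.sum_mul, hπsum, one_mul]
  have hAnY : ∀ n : ℕ, A ^ n * Y = Y := by
    intro n
    induction n with
    | zero => simp
    | succ k ih => rw [pow_succ, Matrix.mul_assoc, hAY, ih]
  have hYAn : ∀ n : ℕ, Y * A ^ n = Y := by
    intro n
    induction n with
    | zero => simp
    | succ k ih => rw [pow_succ, ← Matrix.mul_assoc, ih, hYA]
  have hBpow : ∀ n : ℕ, 1 ≤ n → (A - Y) ^ n = A ^ n - Y := by
    intro n hn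
    induction n with
    | zero => omega
    | succ k ih =>
      rcases Nat.eq_or_lt_of_le hn with h | h
      · simp [← h]
      · have hk : 1 ≤ k := by omega
        rw [pow_succ, ih hk, Matrix.sub_mul, Matrix.mul_sub, Matrix.mul_sub,
          hAnY k, hYA, hYY, ← pow_succ]
        abel
  have hBY : (A - Y) ^ H * Y = 0 := by
    obtain ⟨k, rfl⟩ : ∃ k, H = k + 1 := ⟨H - 1, by omega⟩
    have h1 : (A - Y) * Y = 0 := by rw [Matrix.sub_mul, hAY, hYY, sub_self]
    rw [pow_succ, Matrix.mul_assoc, h1, Matrix.mul_zero]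
  set B := A - Y with hB
  set w := x - (Matrix.diagonal d).mulVec z with hw
  -- the key algebraic identity
  have key : x' - Y.mulVec x' =
      (B ^ H).mulVec (x - Y.mulVec x) - (B ^ H).mulVec ((Matrix.diagonal d).mulVec z) := by
    have h1 : Y.mulVec x' = Y.mulVec w := by
      rw [hupd, Matrix.mulVec_mulVec, hYAn H]
    have h2 : x' - Y.mulVec x' = (B ^ H).mulVec w := by
      rw [h1, hupd, hBpow H hH, Matrix.sub_mulVec]
    have h3 : (B ^ H).mulVec (Y.mulVec x) = 0 := by
      rw [Matrix.mulVec_mulVec, hBY, Matrix.zero_mulVec]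
    rw [h2, hw, Matrix.mulVec_sub, Matrix.mulVec_sub, h3, sub_zero]
  -- bound on the D z term
  set p := ⨆ i, π i with hp
  have hp0 : 0 ≤ p := Real.iSup_nonneg fun i => (hπpos i).le
  have hple : ∀ i, π i ≤ p := fun i =>
    le_ciSup (Set.Finite.bddAbove (Set.finite_range π)) i
  have hDz : piNorm π ((Matrix.diagonal d).mulVec z) ≤ αmax * Real.sqrt p * l2norm z := by
    unfold piNorm l2norm
    have hsum : ∑ i, π i * ((Matrix.diagonal d).mulVec z i) ^ 2
        ≤ p * αmax ^ 2 * ∑ i, z i ^ 2 := by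
      rw [Finset.mul_sum]
      apply Finset.sum_le_sum
      intro i _
      rw [Matrix.mulVec_diagonal]
      have h2 : d i ^ 2 ≤ αmax ^ 2 := by
        rw [← sq_abs]
        exact pow_le_pow_left₀ (abs_nonneg _) (hd i) 2
      have h3 : (d i * z i) ^ 2 ≤ αmax ^ 2 * z i ^ 2 := by
        calc (d i * z i) ^ 2 = d i ^ 2 * z i ^ 2 := by ring
          _ ≤ αmax ^ 2 * z i ^ 2 := mul_le_mul_of_nonneg_right h2 (sq_nonneg _)
      have h4 : π i * (d i * z i) ^ 2 ≤ p * (αmax ^ 2 * z i ^ 2) :=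
        mul_le_mul (hple i) h3 (sq_nonneg _) hp0
      linarith
    calc Real.sqrt (∑ i, π i * ((Matrix.diagonal d).mulVec z i) ^ 2)
        ≤ Real.sqrt (p * αmax ^ 2 * ∑ i, z i ^ 2) := Real.sqrt_le_sqrt hsum
      _ = Real.sqrt p * Real.sqrt (αmax ^ 2) * Real.sqrt (∑ i, z i ^ 2) := by
          rw [Real.sqrt_mul (by positivity), Real.sqrt_mul hp0]
      _ = αmax * Real.sqrt p * Real.sqrt (∑ i, z i ^ 2) := by
          rw [Real.sqrt_sq hαmax]; ring
  -- norm bounds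
  set σ := piMatNorm π B with hσ
  have hσH : piMatNorm π (B ^ H) ≤ σ ^ H := piMatNorm_pow_le π hπpos B H hH
  have t1 : piNorm π ((B ^ H).mulVec (x - Y.mulVec x)) ≤ σ ^ H * piNorm π (x - Y.mulVec x) :=
    le_trans (piNorm_mulVec_le π hπpos _ _)
      (mul_le_mul_of_nonneg_right hσH (piNorm_nonneg _ _))
  have t2 : piNorm π ((B ^ H).mulVec ((Matrix.diagonal d).mulVec z))
      ≤ αmax * Real.sqrt p * σ ^ H * l2norm z := by
    calc piNorm π ((B ^ H).mulVec ((Matrix.diagonal d).mulVec z))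
        ≤ piMatNorm π (B ^ H) * piNorm π ((Matrix.diagonal d).mulVec z) :=
          piNorm_mulVec_le π hπpos _ _
      _ ≤ σ ^ H * (αmax * Real.sqrt p * l2norm z) :=
          mul_le_mul hσH hDz (piNorm_nonneg _ _)
            (pow_nonneg (piMatNorm_nonneg _ _) H)
      _ = αmax * Real.sqrt p * σ ^ H * l2norm z := by ring
  have tri := piNorm_sub_le π hπpos ((B ^ H).mulVec (x - Y.mulVec x))
    ((B ^ H).mulVec ((Matrix.diagonal d).mulVec z))
  rw [key]
  linarith
end
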